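/- If the domain of a partial function f : ℕ →. ℕ is computably enumerable, then f is subTuring equivalent to a total function. More generally, if the characteristic function of dom(f) satisfies χ_{dom(f)} ≤subT f, then f is subTuring equivalent to a total function. -/

import Mathlib

open Classical

noncomputable section

/-- `as` is a valid answer history for the sequential oracle computation of `Φ`
with oracle `g` on input `n`: at each round `k`, the machine outputs a query
`(false, q)` with `q` in the domain of `g`, answered by `g q = as[k]`. -/
def ValidHist (Φ : List ℕ →. Bool × ℕ) (g : ℕ →. ℕ) (n : ℕ) (as : List ℕ) : Prop :=
  ∀ (k : ℕ) (hk : k < as.length), ∃ q : ℕ,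
    (false, q) ∈ Φ (n :: as.take k) ∧ (as[k]'hk) ∈ g q

/-- The sequential oracle computation `Φ[g](n)` halts with output `m`. -/
def HaltsTo (Φ : List ℕ →. Bool × ℕ) (g : ℕ →. ℕ) (n m : ℕ) : Prop :=
  ∃ as : List ℕ, ValidHist Φ g n as ∧ (true, m) ∈ Φ (n :: as)

/-- subTuring reducibility: `f ⊆ Φ[g]` for some partial computable `Φ`. -/
def SubTuringLE (f g : ℕ →. ℕ) : Prop :=
  ∃ Φ : List ℕ →. Bool × ℕ, Partrec Φ ∧ ∀ n m, m ∈ f n → HaltsTo Φ g n m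

/-- subTuring equivalence. -/
def SubTuringEquiv (f g : ℕ →. ℕ) : Prop := SubTuringLE f g ∧ SubTuringLE g f

/-- A set of naturals is computably enumerable. -/
def CEPred (S : Set ℕ) : Prop :=
  Partrec fun n => Part.assert (n ∈ S) fun _ => Part.some 0

/-!
Call `h : ℕ → ℕ` a stage function for `dom f` if `n ∈ dom f ↔ ∃ s, h ⟨n, s⟩ ≠ 0`. If `dom f` is
c.e., "the `s`-step approximation of a code for `dom f` halts on `n`" is a computable stage
function; if `χ_{dom f} ≤subT f`, then `h ⟨n, s⟩ = χ_{dom f} n` is a stage function reducible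
to `f`. Given a stage function `h ≤subT f`, the total function `t ⟨n, s⟩ = f n + 1` if
`h ⟨n, s⟩ ≠ 0`, and `0` otherwise, is equivalent to `f`: from `t`, compute `f n` by searching
for the first `s` with `t ⟨n, s⟩ ≠ 0`; from `f`, compute `t ⟨n, s⟩` by first computing
`h ⟨n, s⟩` and querying `f n` only if it is nonzero, which is safe since then `n ∈ dom f`.
-/

section Semantics

variable {Φ Ψ : List ℕ →. Bool × ℕ} {g : ℕ →. ℕ} {n : ℕ}

theorem validHist_nil : ValidHist Φ g n [] :=
  fun _ hk => absurd hk (Nat.not_lt_zero _)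

theorem ValidHist.take {as : List ℕ} (h : ValidHist Φ g n as) (j : ℕ) :
    ValidHist Φ g n (as.take j) := by
  intro k hk
  obtain ⟨hkj, hkas⟩ := lt_min_iff.1 (List.length_take ▸ hk)
  obtain ⟨q, hq, ha⟩ := h k hkas
  refine ⟨q, ?_, by simpa using ha⟩
  rwa [List.take_take, min_eq_left hkj.le]

theorem ValidHist.append_singleton {as : List ℕ} {q a : ℕ} (h : ValidHist Φ g n as)
    (hq : (false, q) ∈ Φ (n :: as)) (ha : a ∈ g q) : ValidHist Φ g n (as ++ [a]) := by
  intro k hk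
  rcases Nat.lt_or_ge k as.length with hlt | hge
  · obtain ⟨q', hq', ha'⟩ := h k hlt
    refine ⟨q', ?_, ?_⟩
    · rwa [List.take_append_of_le_length hlt.le]
    · rwa [List.getElem_append_left hlt]
  · have hk' : k = as.length := by simp at hk; omega
    subst hk'
    exact ⟨q, by simpa using hq, by simpa using ha⟩

theorem ValidHist.of_query_mem {as : List ℕ} (h : ValidHist Ψ g n as)
    (hΨΦ : ∀ k < as.length, ∀ q, (false, q) ∈ Ψ (n :: as.take k) →
      (false, q) ∈ Φ (n :: as.take k)) :
    ValidHist Φ g n as := fun k hk =>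
  let ⟨q, hq, ha⟩ := h k hk
  ⟨q, hΨΦ k hk q hq, ha⟩

theorem validHist_map_range {t : ℕ → ℕ} {e : ℕ → ℕ} {s : ℕ}
    (hq : ∀ k < s, (false, e k) ∈ Φ (n :: (List.range k).map (t ∘ e))) :
    ValidHist Φ t n ((List.range s).map (t ∘ e)) := by
  intro k hk
  have hks : k < s := by simpa using hk
  refine ⟨e k, ?_, by simp [PFun.coe_val]⟩
  rw [← List.map_take, List.take_range, min_eq_left hks.le]
  exact hq k hks

end Semantics

namespace SubTuringLE

theorem of_computable {h : ℕ → ℕ} (hh : Computable h) (g : ℕ →. ℕ) :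
    SubTuringLE h g := by
  refine ⟨fun l => Part.some (true, h l.headI), ?_, fun n m hm => ⟨[], validHist_nil, ?_⟩⟩
  · exact ((Computable.const true).pair (hh.comp Primrec.list_headI.to_comp)).partrec
  · rw [PFun.coe_val, Part.mem_some_iff] at hm
    simp [hm]

theorem comp {f g : ℕ →. ℕ} (hfg : SubTuringLE f g) {e : ℕ → ℕ} (he : Computable e) :
    SubTuringLE (fun x => f (e x)) g := by
  obtain ⟨Φ, hΦ, hf⟩ := hfg
  refine ⟨fun l => Φ (e l.headI :: l.tail), ?_, fun x m hm => hf (e x) m hm⟩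
  exact hΦ.comp (Computable.list_cons.comp (he.comp Primrec.list_headI.to_comp)
    Primrec.list_tail.to_comp)

end SubTuringLE

section Gate

/-- The least `k` such that `Ψ` halts on the first `k` answers of `l`, or `l.length` if there
is none. -/
def firstStop (Ψ : List ℕ →. Bool × ℕ) (n : ℕ) (l : List ℕ) : Part ℕ :=
  Nat.rfind fun k => (Ψ (n :: l.take k)).map fun r => r.1 || decide (l.length ≤ k)

def gateOutput (q : ℕ → ℕ) (n : ℕ) (rest : List ℕ) (r : Bool × ℕ) : Bool × ℕ :=
  if r.1 then
    if r.2 = 0 then (true, 0)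
    else match rest with
      | [] => (false, q n)
      | a :: _ => (true, a + 1)
  else (false, r.2)

/-- Run `Ψ`; if it halts with output `0`, output `0`, otherwise query `q n` and output the
answer plus one. The history is split by replaying `Ψ` on its prefixes. -/
def gateMachine (Ψ : List ℕ →. Bool × ℕ) (q : ℕ → ℕ) : List ℕ →. Bool × ℕ := fun l =>
  (firstStop Ψ l.headI l.tail).bind fun k =>
    (Ψ (l.headI :: l.tail.take k)).map (gateOutput q l.headI (l.tail.drop k))

theorem primrec_gateOutput {q : ℕ → ℕ} (hq : Primrec q) :
    Primrec fun p : (ℕ × List ℕ) × Bool × ℕ => gateOutput q p.1.1 p.1.2 p.2 := by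
  have hquery : Primrec fun p : (ℕ × List ℕ) × Bool × ℕ =>
      (p.1.2.casesOn (false, q p.1.1) fun a _ => (true, a + 1) : Bool × ℕ) :=
    Primrec.list_casesOn (Primrec.snd.comp Primrec.fst)
      ((Primrec.const false).pair (hq.comp (Primrec.fst.comp Primrec.fst)))
      ((Primrec.const true).pair (Primrec.succ.comp (Primrec.fst.comp Primrec.snd))).to₂
  refine (Primrec.cond (Primrec.fst.comp Primrec.snd)
    (Primrec.ite (Primrec.eq.comp (Primrec.snd.comp Primrec.snd) (Primrec.const 0))
      (Primrec.const (true, 0)) hquery)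
    ((Primrec.const false).pair (Primrec.snd.comp Primrec.snd))).of_eq ?_
  rintro ⟨⟨n, rest⟩, ⟨_ | _, r⟩⟩ <;> cases rest <;> simp [gateOutput]

theorem partrec_gateMachine {Ψ : List ℕ →. Bool × ℕ} (hΨ : Partrec Ψ) {q : ℕ → ℕ}
    (hq : Primrec q) : Partrec (gateMachine Ψ q) := by
  have hcons : Computable₂ fun (l : List ℕ) (k : ℕ) => l.headI :: l.tail.take k :=
    (Primrec.list_cons.comp (Primrec.list_headI.comp Primrec.fst)
      (Primrec.list_take.comp Primrec.snd (Primrec.list_tail.comp Primrec.fst))).to_comp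
  have hstop : Partrec₂ fun (l : List ℕ) (k : ℕ) =>
      (Ψ (l.headI :: l.tail.take k)).map fun r => r.1 || decide (l.tail.length ≤ k) :=
    (hΨ.comp hcons).map (Primrec.or.comp (Primrec.fst.comp Primrec.snd)
      (Primrec.nat_le.comp (Primrec.list_length.comp (Primrec.list_tail.comp
        (Primrec.fst.comp Primrec.fst))) (Primrec.snd.comp Primrec.fst)).decide).to_comp
  refine (Partrec.rfind hstop).bind ((hΨ.comp hcons).map ?_)
  exact ((primrec_gateOutput hq).comp (Primrec.pair (Primrec.pair
    (Primrec.list_headI.comp (Primrec.fst.comp Primrec.fst))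
    (Primrec.list_drop.comp (Primrec.snd.comp Primrec.fst)
      (Primrec.list_tail.comp (Primrec.fst.comp Primrec.fst)))) Primrec.snd)).to_comp

variable {Ψ : List ℕ →. Bool × ℕ} {q : ℕ → ℕ} {g : ℕ →. ℕ} {n : ℕ}

theorem gateMachine_cons (l : List ℕ) : gateMachine Ψ q (n :: l) =
    (firstStop Ψ n l).bind fun k => (Ψ (n :: l.take k)).map (gateOutput q n (l.drop k)) :=
  rfl

theorem mem_firstStop {l : List ℕ} {j : ℕ} {r : Bool × ℕ} (hj : j ≤ l.length)
    (hprev : ∀ k < j, ∃ p, (false, p) ∈ Ψ (n :: l.take k)) (hr : r ∈ Ψ (n :: l.take j))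
    (hstop : r.1 = true ∨ j = l.length) : j ∈ firstStop Ψ n l := by
  refine Nat.mem_rfind.2 ⟨?_, fun {k} hk => ?_⟩
  · refine Part.mem_map_iff _ |>.2 ⟨r, hr, ?_⟩
    rcases hstop with h | h <;> simp [h]
  · obtain ⟨p, hp⟩ := hprev k hk
    exact Part.mem_map_iff _ |>.2 ⟨_, hp, by simp; omega⟩

theorem gateOutput_mem_gateMachine {bs rest : List ℕ} {r : Bool × ℕ} (h : ValidHist Ψ g n bs)
    (hr : r ∈ Ψ (n :: bs)) (hstop : r.1 = true ∨ rest = []) :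
    gateOutput q n rest r ∈ gateMachine Ψ q (n :: (bs ++ rest)) := by
  have hpre : (bs ++ rest).take bs.length = bs := List.take_left
  rw [gateMachine_cons]
  refine Part.mem_bind (mem_firstStop (j := bs.length) (r := r) (by simp) (fun k hk => ?_)
    (by rwa [hpre]) ?_) ?_
  · obtain ⟨p, hp, -⟩ := h k hk
    exact ⟨p, by rwa [List.take_append_of_le_length hk.le]⟩
  · rcases hstop with h | h
    · exact Or.inl h
    · simp [h]
  · rw [hpre, List.drop_left]
    exact Part.mem_map _ hr

theorem ValidHist.gateMachine {bs : List ℕ} (h : ValidHist Ψ g n bs) :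
    ValidHist (gateMachine Ψ q) g n bs := by
  refine h.of_query_mem fun k _ p hp => ?_
  simpa [gateOutput] using
    gateOutput_mem_gateMachine (q := q) (rest := []) (h.take k) hp (Or.inr rfl)

theorem HaltsTo.gateMachine_zero (h : HaltsTo Ψ g n 0) : HaltsTo (gateMachine Ψ q) g n 0 := by
  obtain ⟨bs, hbs, hb⟩ := h
  exact ⟨bs, hbs.gateMachine, by
    simpa [gateOutput] using gateOutput_mem_gateMachine (q := q) (rest := []) hbs hb (Or.inl rfl)⟩

theorem HaltsTo.gateMachine_succ {b a : ℕ} (h : HaltsTo Ψ g n b) (hb : b ≠ 0)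
    (ha : a ∈ g (q n)) : HaltsTo (gateMachine Ψ q) g n (a + 1) := by
  obtain ⟨bs, hbs, hbΨ⟩ := h
  have hquery : (false, q n) ∈ gateMachine Ψ q (n :: bs) := by
    simpa [gateOutput, hb] using
      gateOutput_mem_gateMachine (q := q) (rest := []) hbs hbΨ (Or.inl rfl)
  refine ⟨bs ++ [a], hbs.gateMachine.append_singleton hquery ha, ?_⟩
  simpa [gateOutput, hb] using
    gateOutput_mem_gateMachine (q := q) (rest := [a]) hbs hbΨ (Or.inl rfl)

end Gate

section Search

/-- Query `⟨n, 0⟩, ⟨n, 1⟩, …` until the oracle answers some `a ≠ 0`, then output `a - 1`. -/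
def searchMachine (l : List ℕ) : Bool × ℕ :=
  if l.tail.getLastD 0 = 0 then (false, Nat.pair l.headI l.tail.length)
  else (true, l.tail.getLastD 0 - 1)

theorem computable_searchMachine : Computable searchMachine := by
  have hlast : Primrec fun l : List ℕ => l.tail.getLastD 0 :=
    (Primrec.option_getD.comp (Primrec.list_head?.comp
      (Primrec.list_reverse.comp Primrec.list_tail)) (Primrec.const 0)).of_eq fun l => by
      rw [List.head?_reverse, List.getLastD_eq_getLast?]
  exact (Primrec.ite (Primrec.eq.comp hlast (Primrec.const 0))
    ((Primrec.const false).pair (Primrec₂.natPair.comp Primrec.list_headI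
      (Primrec.list_length.comp Primrec.list_tail)))
    ((Primrec.const true).pair (Primrec.pred.comp hlast))).to_comp

theorem getLastD_map_range (e : ℕ → ℕ) (k : ℕ) :
    ((List.range (k + 1)).map e).getLastD 0 = e k := by
  rw [List.range_succ, List.map_append, List.map_singleton, List.getLastD_concat]

theorem haltsTo_searchMachine {t : ℕ → ℕ} {n s m : ℕ} (hzero : ∀ k < s, t (Nat.pair n k) = 0)
    (hs : t (Nat.pair n s) = m + 1) : HaltsTo searchMachine t n m := by
  refine ⟨(List.range (s + 1)).map (t ∘ Nat.pair n), validHist_map_range fun k hk => ?_, ?_⟩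
  · have hlast : ((List.range k).map (t ∘ Nat.pair n)).getLastD 0 = 0 := by
      cases k with
      | zero => rfl
      | succ k => rw [getLastD_map_range]; exact hzero k (by omega)
    simp only [PFun.coe_val, Part.mem_some_iff, searchMachine, List.tail_cons, List.headI_cons,
      hlast, List.length_map, List.length_range, if_true]
  · simp only [PFun.coe_val, Part.mem_some_iff, searchMachine, List.tail_cons,
      getLastD_map_range, Function.comp_apply, hs, Nat.add_one_ne_zero, if_false,
      Nat.add_sub_cancel]

end Search

/-- `stagedTotal f h ⟨n, s⟩ = f n + 1` once stage `s` certifies `n ∈ dom f`, and `0` otherwise. -/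
def stagedTotal (f : ℕ →. ℕ) (h : ℕ → ℕ) (x : ℕ) : ℕ :=
  if hx : h x ≠ 0 ∧ (f x.unpair.1).Dom then (f x.unpair.1).get hx.2 + 1 else 0

theorem subTuringEquiv_stagedTotal (f : ℕ →. ℕ) {h : ℕ → ℕ} (hred : SubTuringLE h f)
    (hdom : ∀ n, (f n).Dom ↔ ∃ s, h (Nat.pair n s) ≠ 0) :
    SubTuringEquiv f (stagedTotal f h) := by
  constructor
  · refine ⟨searchMachine, computable_searchMachine, fun n m hm => ?_⟩
    have hex := (hdom n).1 (Part.dom_iff_mem.2 ⟨m, hm⟩)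
    refine haltsTo_searchMachine (s := Nat.find hex) (fun k hk => ?_) ?_
    · have hk0 : h (Nat.pair n k) = 0 := not_not.1 (Nat.find_min hex hk)
      simp [stagedTotal, hk0]
    · simp [stagedTotal, Nat.find_spec hex, Part.dom_iff_mem.2 ⟨m, hm⟩, Part.get_eq_of_mem hm]
  · obtain ⟨Ψ, hΨ, hred⟩ := hred
    refine ⟨gateMachine Ψ fun x => x.unpair.1,
      partrec_gateMachine hΨ (Primrec.fst.comp Primrec.unpair), fun x m hm => ?_⟩
    rw [PFun.coe_val, Part.mem_some_iff] at hm
    subst hm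
    have hx := hred x (h x) (Part.mem_some _)
    by_cases h0 : h x = 0
    · rw [h0] at hx
      simpa [stagedTotal, h0] using hx.gateMachine_zero
    · have hd : (f x.unpair.1).Dom := (hdom _).2 ⟨x.unpair.2, by rwa [Nat.pair_unpair]⟩
      simpa [stagedTotal, h0, hd] using hx.gateMachine_succ h0 (Part.get_mem hd)

open Nat.Partrec in
theorem CEPred.exists_stages {S : Set ℕ} (hS : CEPred S) :
    ∃ h : ℕ → ℕ, Computable h ∧ ∀ n, n ∈ S ↔ ∃ s, h (Nat.pair n s) ≠ 0 := by
  obtain ⟨c, hc⟩ := Code.exists_code.1 (Partrec.nat_iff.1 hS)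
  refine ⟨fun x => cond (Code.evaln x.unpair.2 c x.unpair.1).isSome 1 0, ?_,
    fun n => ?_⟩
  · exact (Primrec.cond (Primrec.option_isSome.comp (Code.primrec_evaln.comp
      (((Primrec.snd.comp Primrec.unpair).pair (Primrec.const c)).pair
        (Primrec.fst.comp Primrec.unpair)))) (Primrec.const 1) (Primrec.const 0)).to_comp
  · have hS : n ∈ S ↔ (c.eval n).Dom := by
      rw [hc]
      exact ⟨fun hn => ⟨hn, trivial⟩, fun hn => hn.1⟩
    rw [hS, Part.dom_iff_mem]
    simp only [Nat.unpair_pair, Code.evaln_complete]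
    constructor
    · rintro ⟨y, s, hs⟩
      exact ⟨s, by simp [Option.mem_def.1 hs]⟩
    · rintro ⟨s, hs⟩
      cases he : Code.evaln s c n with
      | none => simp [he] at hs
      | some y => exact ⟨y, s, he⟩

theorem ce_domain_total_degree (f : ℕ →. ℕ) :
    (CEPred f.Dom → ∃ t : ℕ → ℕ, SubTuringEquiv f (t : ℕ →. ℕ)) ∧
    (SubTuringLE (fun n => Part.some (if n ∈ f.Dom then 1 else 0)) f →
      ∃ t : ℕ → ℕ, SubTuringEquiv f (t : ℕ →. ℕ)) := by
  refine ⟨fun hce => ?_, fun hχ => ?_⟩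
  · obtain ⟨h, hh, hstages⟩ := hce.exists_stages
    exact ⟨_, subTuringEquiv_stagedTotal f (.of_computable hh f) hstages⟩
  · have hred : SubTuringLE (fun x => if x.unpair.1 ∈ f.Dom then 1 else 0 : ℕ → ℕ) f :=
      hχ.comp (Primrec.fst.comp Primrec.unpair).to_comp
    refine ⟨_, subTuringEquiv_stagedTotal f hred fun n => ?_⟩
    simp [PFun.mem_dom, Part.dom_iff_mem]
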